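/- arXiv:0809.2258 — 4 statements merged into one kernel-verified Lean document; each statement's English description precedes it below -/
import Mathlib

section
/- Let 0<p<1 and q=1−p. In a random graph order on the positive integers ℕ with parameter p, for every k≥1 the probability that the element k is a post (i.e., comparable under the order to every other element) equals λ_{k−1}(q)·κ(q). In particular this probability is strictly greater than κ(q)². -/
open MeasureTheory ProbabilityTheory

/-- The index set of potential edges of a random graph order on `ℕ = {1, 2, 3, …}`:
pairs `(i, j)` with `1 ≤ i < j`. -/
abbrev GraphOrderEdge : Type := {ij : ℕ × ℕ // 1 ≤ ij.1 ∧ ij.1 < ij.2}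

/-- The random graph order relation `≺_ω`: the transitive closure of the relation
`{(i, j) : 1 ≤ i < j and ω(i, j) = 1}`. -/
def GraphOrderRel (ω : GraphOrderEdge → Bool) (a b : ℕ) : Prop :=
  Relation.TransGen (fun x y => ∃ h : 1 ≤ x ∧ x < y, ω ⟨(x, y), h⟩ = true) a b

/-- `μ` is the law of a random graph order on `ℕ = {1, 2, 3, …}` with parameter `p`:
a probability measure on edge configurations whose coordinates are independent
Bernoulli(`p`) random variables. -/
structure IsRandomGraphOrderMeasure (μ : Measure (GraphOrderEdge → Bool)) (p : ℝ)
    (hp : 0 < p ∧ p < 1) : Prop where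
  isProb : IsProbabilityMeasure μ
  indep : iIndepFun (fun e ω => ω e) μ
  bernoulli : ∀ e : GraphOrderEdge, μ.map (fun ω => ω e) =
    (PMF.bernoulli (Real.toNNReal p) (Real.toNNReal_le_one.mpr hp.2.le)).toMeasure

/-- Partial product of the Euler function: `λ_k(q) = ∏_{i=1}^k (1 - q^i)`, `λ_0(q) = 1`. -/
noncomputable def eulerLam (q : ℝ) (k : ℕ) : ℝ := ∏ i ∈ Finset.range k, (1 - q ^ (i + 1))

/-- The Euler function `κ(q) = ∏_{i=1}^∞ (1 - q^i)`. -/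
noncomputable def eulerKappa (q : ℝ) : ℝ := ∏' i : ℕ, (1 - q ^ (i + 1))

/-!
The element `k` is a post iff every `m < k` has an edge to some `y ∈ (m, k]` and every `m > k`
receives an edge from some `x ∈ [k, m)`: follow such edges up to `k`, resp. down to `k`.
These events live on pairwise disjoint finite sets of edges, of sizes `k - m` and `m - k`, so they
are independent with probabilities `1 - q ^ (k - m)` and `1 - q ^ (m - k)`. The product over
`m < k` is `λ_{k-1}(q)`, the product over `k < m ≤ k + n` is `λ_n(q) → κ(q)`, and `κ(q)²` is
strictly smaller because `0 < κ(q) < λ_{k-1}(q)`.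
-/

open MeasureTheory ProbabilityTheory Filter Topology Finset
open scoped ENNReal

section DependsOnFinset

variable {ι β : Type*}

theorem DependsOn.eq_preimage_image_restrict {s : Finset ι} {A : Set (ι → β)}
    (hA : DependsOn (· ∈ A) (s : Set ι)) :
    A = (fun ω (i : s) => ω i) ⁻¹' ((fun ω (i : s) => ω i) '' A) := by
  refine (Set.subset_preimage_image _ _).antisymm ?_
  rintro ω ⟨ω', hω', hω'ω⟩
  exact cast (hA fun i hi => congrFun hω'ω ⟨i, hi⟩) hω'

theorem DependsOn.measurableSet_of_finset [MeasurableSpace β] [MeasurableSingletonClass β]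
    [Countable β] {s : Finset ι} {A : Set (ι → β)} (hA : DependsOn (· ∈ A) (s : Set ι)) :
    MeasurableSet A := by
  rw [hA.eq_preimage_image_restrict]
  exact measurable_pi_lambda _ (fun i => measurable_pi_apply i.1)
    (Set.to_countable _).measurableSet

theorem dependsOn_mem_exists_eq (s : Finset ι) (b : β) :
    DependsOn (· ∈ {ω : ι → β | ∃ i ∈ s, ω i = b}) (s : Set ι) := by
  intro x y hxy
  change (∃ i ∈ s, x i = b) = ∃ i ∈ s, y i = b
  exact propext (exists_congr fun i => and_congr_right fun hi => by rw [hxy i hi])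

theorem dependsOn_mem_biInter [DecidableEq ι] {J : Type*} {I : Finset J} {S : J → Finset ι}
    {A : J → Set (ι → β)} (hA : ∀ j ∈ I, DependsOn (· ∈ A j) (S j : Set ι)) :
    DependsOn (· ∈ ⋂ j ∈ I, A j) (I.biUnion S : Set ι) := by
  intro x y hxy
  simp only [Set.mem_iInter, eq_iff_iff]
  exact forall₂_congr fun j hj =>
    eq_iff_iff.mp (hA j hj fun i hi => hxy i (mem_biUnion.mpr ⟨j, hj, hi⟩))

end DependsOnFinset

section IndependentCoordinates

variable {ι β : Type*} [MeasurableSpace β] [MeasurableSingletonClass β] [Countable β]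
  {μ : Measure (ι → β)}

theorem measure_inter_eq_mul_of_dependsOn (hμ : iIndepFun (fun i ω => ω i) μ) {s t : Finset ι}
    (hst : Disjoint s t) {A B : Set (ι → β)} (hA : DependsOn (· ∈ A) (s : Set ι))
    (hB : DependsOn (· ∈ B) (t : Set ι)) : μ (A ∩ B) = μ A * μ B := by
  rw [hA.eq_preimage_image_restrict, hB.eq_preimage_image_restrict]
  exact indepFun_iff_measure_inter_preimage_eq_mul.mp
    (hμ.indepFun_finset s t hst measurable_pi_apply) _ _
    (Set.to_countable _).measurableSet (Set.to_countable _).measurableSet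

theorem measure_biInter_eq_prod_of_dependsOn (hμ : iIndepFun (fun i ω => ω i) μ) {J : Type*}
    (I : Finset J) {S : J → Finset ι} (hS : (I : Set J).PairwiseDisjoint S)
    {A : J → Set (ι → β)} (hA : ∀ j ∈ I, DependsOn (· ∈ A j) (S j : Set ι)) :
    μ (⋂ j ∈ I, A j) = ∏ j ∈ I, μ (A j) := by
  classical
  have := hμ.isProbabilityMeasure
  induction I using Finset.induction_on with
  | empty => simp
  | insert a I ha ih =>
    have hdisj : Disjoint (S a) (I.biUnion S) := disjoint_biUnion_right _ _ _ |>.mpr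
      fun j hj => hS (mem_insert_self a I) (mem_insert_of_mem hj)
        (ne_of_mem_of_not_mem hj ha).symm
    rw [set_biInter_insert, prod_insert ha,
      measure_inter_eq_mul_of_dependsOn hμ hdisj (hA a (mem_insert_self a I))
        (dependsOn_mem_biInter fun j hj => hA j (mem_insert_of_mem hj)),
      ih (hS.subset (by simp)) fun j hj => hA j (mem_insert_of_mem hj)]

end IndependentCoordinates

section BernoulliCoordinates

variable {ι : Type*} {μ : Measure (ι → Bool)}

theorem measure_exists_eq_true (hμ : iIndepFun (fun i ω => ω i) μ) {r : ℝ≥0∞}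
    (hr : ∀ i, μ {ω | ω i = false} = r) (s : Finset ι) :
    μ {ω | ∃ i ∈ s, ω i = true} = 1 - r ^ s.card := by
  have := hμ.isProbabilityMeasure
  have hall : μ (⋂ i ∈ s, {ω | ω i = false}) = r ^ s.card := by
    rw [hμ.meas_biInter (s := fun i => {ω | ω i = false})
      fun i _ => ⟨{false}, measurableSet_singleton _, rfl⟩]
    simp [hr]
  have hcompl : {ω : ι → Bool | ∃ i ∈ s, ω i = true} = (⋂ i ∈ s, {ω | ω i = false})ᶜ := by
    ext ω
    simp
  rw [hcompl, prob_compl_eq_one_sub (Finset.measurableSet_biInter _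
    fun i _ => measurableSet_eq_fun (measurable_pi_apply i) measurable_const), hall]

theorem measure_biInter_exists_eq_true (hμ : iIndepFun (fun i ω => ω i) μ) {r : ℝ≥0∞}
    (hr : ∀ i, μ {ω | ω i = false} = r) {J : Type*} (I : Finset J) {S : J → Finset ι}
    (hS : (I : Set J).PairwiseDisjoint S) :
    μ (⋂ j ∈ I, {ω | ∃ i ∈ S j, ω i = true}) = ∏ j ∈ I, (1 - r ^ (S j).card) := by
  rw [measure_biInter_eq_prod_of_dependsOn hμ I hS fun j _ => dependsOn_mem_exists_eq _ _]
  simp_rw [measure_exists_eq_true hμ hr]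

end BernoulliCoordinates

theorem prod_Ico_one_sub_eq_prod_range {M : Type*} [CommMonoid M] (f : ℕ → M) (k : ℕ) :
    ∏ m ∈ Ico 1 k, f (k - m) = ∏ i ∈ range (k - 1), f (i + 1) :=
  prod_nbij' (fun m => k - 1 - m) (fun i => k - 1 - i)
    (fun m hm => by simp only [mem_Ico, mem_range] at hm ⊢; omega)
    (fun i hi => by simp only [mem_Ico, mem_range] at hi ⊢; omega)
    (fun m hm => by simp only [mem_Ico] at hm; omega)
    (fun i hi => by simp only [mem_range] at hi; omega)
    (fun m hm => by simp only [mem_Ico] at hm; congr 1; omega)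

theorem prod_Ioc_sub_eq_prod_range {M : Type*} [CommMonoid M] (f : ℕ → M) (k n : ℕ) :
    ∏ m ∈ Ioc k (k + n), f (m - k) = ∏ i ∈ range n, f (i + 1) :=
  prod_nbij' (fun m => m - k - 1) (fun i => k + 1 + i)
    (fun m hm => by simp only [mem_Ioc, mem_range] at hm ⊢; omega)
    (fun i hi => by simp only [mem_Ioc, mem_range] at hi ⊢; omega)
    (fun m hm => by simp only [mem_Ioc] at hm; omega)
    (fun i _ => by omega)
    (fun m hm => by simp only [mem_Ioc] at hm; congr 1; omega)

section EulerFunction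

variable {q : ℝ}

theorem one_sub_pow_succ_pos (hq0 : 0 ≤ q) (hq1 : q < 1) (i : ℕ) : 0 < 1 - q ^ (i + 1) :=
  sub_pos.mpr (pow_lt_one₀ hq0 hq1 i.succ_ne_zero)

theorem eulerLam_pos (hq0 : 0 ≤ q) (hq1 : q < 1) (n : ℕ) : 0 < eulerLam q n :=
  prod_pos fun i _ => one_sub_pow_succ_pos hq0 hq1 i

theorem eulerLam_succ (n : ℕ) : eulerLam q (n + 1) = eulerLam q n * (1 - q ^ (n + 1)) :=
  prod_range_succ _ _

theorem antitone_eulerLam (hq0 : 0 ≤ q) (hq1 : q < 1) : Antitone (eulerLam q) :=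
  antitone_nat_of_succ_le fun n => by
    rw [eulerLam_succ]
    exact mul_le_of_le_one_right (eulerLam_pos hq0 hq1 n).le (sub_le_self _ (by positivity))

theorem summable_log_one_sub_pow_succ (hq0 : 0 ≤ q) (hq1 : q < 1) :
    Summable fun i : ℕ => Real.log (1 - q ^ (i + 1)) := by
  have hgeom : Summable fun i : ℕ => -q ^ (i + 1) :=
    ((summable_nat_add_iff 1).mpr (summable_geometric_of_lt_one hq0 hq1)).neg
  simpa [sub_eq_add_neg] using Real.summable_log_one_add_of_summable hgeom

theorem eulerKappa_eq_exp_tsum_log (hq0 : 0 ≤ q) (hq1 : q < 1) :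
    eulerKappa q = Real.exp (∑' i : ℕ, Real.log (1 - q ^ (i + 1))) :=
  (Real.rexp_tsum_eq_tprod (one_sub_pow_succ_pos hq0 hq1)
    (summable_log_one_sub_pow_succ hq0 hq1)).symm

theorem eulerKappa_pos (hq0 : 0 ≤ q) (hq1 : q < 1) : 0 < eulerKappa q := by
  rw [eulerKappa_eq_exp_tsum_log hq0 hq1]
  exact Real.exp_pos _

theorem tendsto_eulerLam (hq0 : 0 ≤ q) (hq1 : q < 1) :
    Tendsto (eulerLam q) atTop (𝓝 (eulerKappa q)) :=
  (Real.multipliable_of_summable_log (one_sub_pow_succ_pos hq0 hq1)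
    (summable_log_one_sub_pow_succ hq0 hq1)).hasProd.tendsto_prod_nat

theorem eulerKappa_lt_eulerLam (hq0 : 0 < q) (hq1 : q < 1) (n : ℕ) :
    eulerKappa q < eulerLam q n :=
  calc eulerKappa q
      ≤ eulerLam q (n + 1) :=
        (antitone_eulerLam hq0.le hq1).le_of_tendsto (tendsto_eulerLam hq0.le hq1) _
    _ = eulerLam q n * (1 - q ^ (n + 1)) := eulerLam_succ n
    _ < eulerLam q n :=
        mul_lt_of_lt_one_right (eulerLam_pos hq0.le hq1 n) (sub_lt_self _ (pow_pos hq0 _))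

theorem ofReal_eulerLam (hq0 : 0 ≤ q) (hq1 : q < 1) (n : ℕ) :
    ENNReal.ofReal (eulerLam q n) = ∏ i ∈ range n, (1 - ENNReal.ofReal q ^ (i + 1)) := by
  rw [eulerLam, ENNReal.ofReal_prod_of_nonneg fun i _ => (one_sub_pow_succ_pos hq0 hq1 i).le]
  refine prod_congr rfl fun i _ => ?_
  rw [ENNReal.ofReal_sub _ (by positivity), ENNReal.ofReal_one, ENNReal.ofReal_pow hq0]

end EulerFunction

theorem IsRandomGraphOrderMeasure.measure_eq_false {μ : Measure (GraphOrderEdge → Bool)} {p : ℝ}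
    {hp : 0 < p ∧ p < 1} (hμ : IsRandomGraphOrderMeasure μ p hp) (e : GraphOrderEdge) :
    μ {ω | ω e = false} = ENNReal.ofReal (1 - p) := by
  change μ ((fun ω => ω e) ⁻¹' {false}) = _
  rw [← Measure.map_apply (measurable_pi_apply e) (measurableSet_singleton _), hμ.bernoulli e,
    PMF.toMeasure_apply_singleton _ _ (measurableSet_singleton _)]
  change 1 - ENNReal.ofReal p = _
  rw [ENNReal.ofReal_sub 1 hp.1.le, ENNReal.ofReal_one]

namespace GraphOrder

def Step (ω : GraphOrderEdge → Bool) (x y : ℕ) : Prop :=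
  ∃ h : 1 ≤ x ∧ x < y, ω ⟨(x, y), h⟩ = true

def IsPost (ω : GraphOrderEdge → Bool) (k : ℕ) : Prop :=
  ∀ m : ℕ, 1 ≤ m → m ≠ k → (GraphOrderRel ω m k ∨ GraphOrderRel ω k m)

variable {ω : GraphOrderEdge → Bool}

theorem _root_.GraphOrderRel.lt {a b : ℕ} (h : GraphOrderRel ω a b) : a < b :=
  Relation.TransGen.trans_induction_on h (fun hs => hs.1.2) fun _ _ => lt_trans

theorem _root_.GraphOrderRel.exists_step_le {a b : ℕ} (h : GraphOrderRel ω a b) :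
    ∃ c ≤ b, Step ω a c := by
  obtain ⟨c, hac, hcb⟩ := Relation.TransGen.head'_iff.mp h
  exact ⟨c, (Relation.reflTransGen_iff_eq_or_transGen.mp hcb).elim Eq.ge
    fun hcb => (GraphOrderRel.lt hcb).le, hac⟩

theorem _root_.GraphOrderRel.exists_step_ge {a b : ℕ} (h : GraphOrderRel ω a b) :
    ∃ c ≥ a, Step ω c b := by
  obtain ⟨c, hac, hcb⟩ := Relation.TransGen.tail'_iff.mp h
  exact ⟨c, (Relation.reflTransGen_iff_eq_or_transGen.mp hac).elim Eq.ge
    fun hac => (GraphOrderRel.lt hac).le, hcb⟩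

theorem forall_graphOrderRel_lt_iff {k : ℕ} :
    (∀ m, 1 ≤ m → m < k → GraphOrderRel ω m k) ↔ ∀ m, 1 ≤ m → m < k → ∃ y ≤ k, Step ω m y := by
  refine ⟨fun h m hm hmk => (h m hm hmk).exists_step_le, fun h m hm hmk => ?_⟩
  induction hd : k - m using Nat.strong_induction_on generalizing m with
  | _ d ih =>
    obtain ⟨y, hyk, hy⟩ := h m hm hmk
    rcases hyk.eq_or_lt with rfl | hyk
    · exact .single hy
    · have hmy := hy.1.2
      exact .head hy (ih (k - y) (by omega) y (by omega) hyk rfl)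

theorem forall_graphOrderRel_gt_iff {k : ℕ} :
    (∀ m, k < m → GraphOrderRel ω k m) ↔ ∀ m, k < m → ∃ x ≥ k, Step ω x m := by
  refine ⟨fun h m hkm => (h m hkm).exists_step_ge, fun h m hkm => ?_⟩
  induction m using Nat.strong_induction_on with
  | _ m ih =>
    obtain ⟨x, hkx, hx⟩ := h m hkm
    rcases hkx.eq_or_lt with rfl | hkx
    · exact .single hx
    · exact .tail (ih x hx.1.2 hkx) hx

theorem isPost_iff {k : ℕ} : IsPost ω k ↔
    (∀ m, 1 ≤ m → m < k → ∃ y ≤ k, Step ω m y) ∧ ∀ m, k < m → ∃ x ≥ k, Step ω x m := by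
  rw [← forall_graphOrderRel_lt_iff, ← forall_graphOrderRel_gt_iff]
  refine ⟨fun h => ⟨fun m hm hmk => ?_, fun m hkm => ?_⟩, fun ⟨hlt, hgt⟩ m hm hmk => ?_⟩
  · exact (h m hm hmk.ne).resolve_right fun hkm => (hkm.lt.trans hmk).false
  · exact (h m (by omega) hkm.ne').resolve_left fun hmk => (hmk.lt.trans hkm).false
  · rcases hmk.lt_or_gt with hmk | hkm
    exacts [.inl (hlt m hm hmk), .inr (hgt m hkm)]

def outEdges (m k : ℕ) : Finset GraphOrderEdge := ({m} ×ˢ Ioc m k).subtype _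

def inEdges (k m : ℕ) : Finset GraphOrderEdge := (Ico k m ×ˢ {m}).subtype _

theorem mem_outEdges {m k : ℕ} {e : GraphOrderEdge} :
    e ∈ outEdges m k ↔ e.1.1 = m ∧ e.1.2 ≤ k := by
  have := e.2
  simp only [outEdges, mem_subtype, mem_product, mem_singleton, mem_Ioc]
  omega

theorem mem_inEdges {k m : ℕ} {e : GraphOrderEdge} :
    e ∈ inEdges k m ↔ k ≤ e.1.1 ∧ e.1.2 = m := by
  have := e.2
  simp only [inEdges, mem_subtype, mem_product, mem_singleton, mem_Ico]
  omega

theorem exists_mem_outEdges_iff {m k : ℕ} :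
    (∃ e ∈ outEdges m k, ω e = true) ↔ ∃ y ≤ k, Step ω m y := by
  constructor
  · rintro ⟨⟨⟨x, y⟩, hxy⟩, he, hω⟩
    obtain ⟨rfl, hyk⟩ := mem_outEdges.mp he
    exact ⟨y, hyk, hxy, hω⟩
  · rintro ⟨y, hyk, hmy, hω⟩
    exact ⟨⟨(m, y), hmy⟩, mem_outEdges.mpr ⟨rfl, hyk⟩, hω⟩

theorem exists_mem_inEdges_iff {k m : ℕ} :
    (∃ e ∈ inEdges k m, ω e = true) ↔ ∃ x ≥ k, Step ω x m := by
  constructor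
  · rintro ⟨⟨⟨x, y⟩, hxy⟩, he, hω⟩
    obtain ⟨hkx, rfl⟩ := mem_inEdges.mp he
    exact ⟨x, hkx, hxy, hω⟩
  · rintro ⟨x, hkx, hxm, hω⟩
    exact ⟨⟨(x, m), hxm⟩, mem_inEdges.mpr ⟨hkx, rfl⟩, hω⟩

theorem card_outEdges {m : ℕ} (hm : 1 ≤ m) (k : ℕ) : (outEdges m k).card = k - m := by
  rw [outEdges, card_subtype, filter_true_of_mem, card_product, card_singleton, one_mul,
    Nat.card_Ioc]
  simp only [mem_product, mem_singleton, mem_Ioc]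
  omega

theorem card_inEdges {k : ℕ} (hk : 1 ≤ k) (m : ℕ) : (inEdges k m).card = m - k := by
  rw [inEdges, card_subtype, filter_true_of_mem, card_product, card_singleton, mul_one,
    Nat.card_Ico]
  simp only [mem_product, mem_singleton, mem_Ico]
  omega

def lowerEvent (k : ℕ) : Set (GraphOrderEdge → Bool) :=
  ⋂ m ∈ Ico 1 k, {ω | ∃ e ∈ outEdges m k, ω e = true}

def upperEvent (k n : ℕ) : Set (GraphOrderEdge → Bool) :=
  ⋂ m ∈ Ioc k (k + n), {ω | ∃ e ∈ inEdges k m, ω e = true}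

theorem dependsOn_lowerEvent (k : ℕ) :
    DependsOn (· ∈ lowerEvent k) ((Ico 1 k).biUnion (outEdges · k) : Set GraphOrderEdge) :=
  dependsOn_mem_biInter fun _ _ => dependsOn_mem_exists_eq _ _

theorem dependsOn_upperEvent (k n : ℕ) :
    DependsOn (· ∈ upperEvent k n) ((Ioc k (k + n)).biUnion (inEdges k) : Set GraphOrderEdge) :=
  dependsOn_mem_biInter fun _ _ => dependsOn_mem_exists_eq _ _

theorem setOf_isPost_eq_iInter (k : ℕ) :
    {ω | IsPost ω k} = ⋂ n, lowerEvent k ∩ upperEvent k n := by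
  ext ω
  simp only [lowerEvent, upperEvent, Set.mem_ofPred_eq, isPost_iff, Set.mem_iInter,
    Set.mem_inter_iff, mem_Ico, mem_Ioc, exists_mem_outEdges_iff, exists_mem_inEdges_iff]
  exact ⟨fun ⟨hlt, hgt⟩ _ => ⟨fun m hm => hlt m hm.1 hm.2, fun m hm => hgt m hm.1⟩,
    fun h => ⟨fun m hm hmk => (h 0).1 m ⟨hm, hmk⟩, fun m hkm => (h m).2 m ⟨hkm, by omega⟩⟩⟩

section Measure

variable {μ : Measure (GraphOrderEdge → Bool)} {p : ℝ} {hp : 0 < p ∧ p < 1}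

theorem measure_lowerEvent (hμ : IsRandomGraphOrderMeasure μ p hp) (k : ℕ) :
    μ (lowerEvent k) = ENNReal.ofReal (eulerLam (1 - p) (k - 1)) := by
  rw [lowerEvent, measure_biInter_exists_eq_true hμ.indep hμ.measure_eq_false,
    ofReal_eulerLam (by linarith) (by linarith),
    ← prod_Ico_one_sub_eq_prod_range (fun d => 1 - ENNReal.ofReal (1 - p) ^ d)]
  · exact prod_congr rfl fun m hm => by rw [card_outEdges (mem_Ico.mp hm).1]
  · exact fun m _ m' _ hne => disjoint_left.mpr fun e he he' =>
      hne ((mem_outEdges.mp he).1.symm.trans (mem_outEdges.mp he').1)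

theorem measure_upperEvent (hμ : IsRandomGraphOrderMeasure μ p hp) {k : ℕ} (hk : 1 ≤ k)
    (n : ℕ) :
    μ (upperEvent k n) = ENNReal.ofReal (eulerLam (1 - p) n) := by
  rw [upperEvent, measure_biInter_exists_eq_true hμ.indep hμ.measure_eq_false,
    ofReal_eulerLam (by linarith) (by linarith),
    ← prod_Ioc_sub_eq_prod_range (fun d => 1 - ENNReal.ofReal (1 - p) ^ d)]
  · exact prod_congr rfl fun m _ => by rw [card_inEdges hk]
  · exact fun m _ m' _ hne => disjoint_left.mpr fun e he he' =>
      hne ((mem_inEdges.mp he).2.symm.trans (mem_inEdges.mp he').2)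

theorem measure_lowerEvent_inter_upperEvent (hμ : IsRandomGraphOrderMeasure μ p hp) {k : ℕ}
    (hk : 1 ≤ k) (n : ℕ) :
    μ (lowerEvent k ∩ upperEvent k n) =
      ENNReal.ofReal (eulerLam (1 - p) (k - 1) * eulerLam (1 - p) n) := by
  have hdisj :
      Disjoint ((Ico 1 k).biUnion (outEdges · k)) ((Ioc k (k + n)).biUnion (inEdges k)) := by
    simp only [disjoint_biUnion_left, disjoint_biUnion_right]
    exact fun m' _ m hm => disjoint_left.mpr fun e he he' => by
      have := (mem_outEdges.mp he).1 ▸ (mem_inEdges.mp he').1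
      have := (mem_Ico.mp hm).2
      omega
  rw [ENNReal.ofReal_mul (eulerLam_pos (by linarith) (by linarith) _).le,
    ← measure_lowerEvent hμ, ← measure_upperEvent hμ hk]
  exact measure_inter_eq_mul_of_dependsOn hμ.indep hdisj (dependsOn_lowerEvent k)
    (dependsOn_upperEvent k n)

theorem measure_isPost (hμ : IsRandomGraphOrderMeasure μ p hp) {k : ℕ} (hk : 1 ≤ k) :
    μ {ω | IsPost ω k} = ENNReal.ofReal (eulerLam (1 - p) (k - 1) * eulerKappa (1 - p)) := by
  have := hμ.isProb
  have hanti : Antitone fun n => lowerEvent k ∩ upperEvent k n := fun n n' hnn' =>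
    Set.inter_subset_inter_right _ <| Set.biInter_subset_biInter_left fun m hm => by
      simp only [coe_Ioc, Set.mem_Ioc] at hm ⊢
      omega
  rw [setOf_isPost_eq_iInter]
  refine tendsto_nhds_unique
    (tendsto_measure_iInter_atTop (fun n => ?_) hanti ⟨0, measure_ne_top μ _⟩) ?_
  · exact ((dependsOn_lowerEvent k).measurableSet_of_finset.inter
      (dependsOn_upperEvent k n).measurableSet_of_finset).nullMeasurableSet
  simp_rw [Function.comp_def, measure_lowerEvent_inter_upperEvent hμ hk]
  exact ENNReal.tendsto_ofReal ((tendsto_eulerLam (by linarith) (by linarith)).const_mul _)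

end Measure

end GraphOrder

/-- In a random graph order on `ℕ = {1, 2, …}` with parameter `0 < p < 1` and `q = 1 - p`,
for every `k ≥ 1` the probability that `k` is a post (related to every other element)
equals `λ_{k-1}(q) · κ(q)`; in particular it is strictly greater than `κ(q)²`. -/
theorem prob_isPost_eq (p q : ℝ) (hp : 0 < p ∧ p < 1) (hq : q = 1 - p)
    (μ : Measure (GraphOrderEdge → Bool)) (hμ : IsRandomGraphOrderMeasure μ p hp)
    (k : ℕ) (hk : 1 ≤ k) :
    μ {ω | ∀ m : ℕ, 1 ≤ m → m ≠ k → (GraphOrderRel ω m k ∨ GraphOrderRel ω k m)} =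
        ENNReal.ofReal (eulerLam q (k - 1) * eulerKappa q) ∧
    ENNReal.ofReal (eulerKappa q ^ 2) <
      μ {ω | ∀ m : ℕ, 1 ≤ m → m ≠ k → (GraphOrderRel ω m k ∨ GraphOrderRel ω k m)} := by
  subst hq
  have hq0 : 0 < 1 - p := by linarith
  have hq1 : 1 - p < 1 := by linarith
  have hpost := GraphOrder.measure_isPost hμ hk
  refine ⟨hpost, hpost ▸ (ENNReal.ofReal_lt_ofReal_iff ?_).mpr ?_⟩
  · exact mul_pos (eulerLam_pos hq0.le hq1 _) (eulerKappa_pos hq0.le hq1)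
  · rw [sq]
    exact mul_lt_mul_of_pos_right (eulerKappa_lt_eulerLam hq0 hq1 _) (eulerKappa_pos hq0.le hq1)
end

section
/- Let 0<p<1, q=1−p, and n≥1. In a random graph order on {1,2,…,n} with parameter p, for every 1≤k≤n the probability that the element k is a post equals λ_{k−1}(q)·λ_{n−k}(q). -/
open MeasureTheory ProbabilityTheory

/-- The index set of potential edges of a random graph order on `{1, 2, …, n}`:
pairs `(i, j)` with `1 ≤ i < j ≤ n`. -/
abbrev FinGraphOrderEdge (n : ℕ) : Type := {ij : ℕ × ℕ // 1 ≤ ij.1 ∧ ij.1 < ij.2 ∧ ij.2 ≤ n}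

/-- The random graph order relation `≺_ω` on `{1, …, n}`: the transitive closure of the
relation `{(i, j) : 1 ≤ i < j ≤ n and ω(i, j) = 1}`. -/
def FinGraphOrderRel {n : ℕ} (ω : FinGraphOrderEdge n → Bool) (a b : ℕ) : Prop :=
  Relation.TransGen (fun x y => ∃ h : 1 ≤ x ∧ x < y ∧ y ≤ n, ω ⟨(x, y), h⟩ = true) a b

/-- `k` is a post of the random graph order on `{1, …, n}` determined by `ω`: every other
element `m ∈ {1, …, n}` satisfies `m ≺_ω k` or `k ≺_ω m`. -/
def FinIsPost {n : ℕ} (ω : FinGraphOrderEdge n → Bool) (k : ℕ) : Prop :=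
  ∀ m : ℕ, 1 ≤ m → m ≤ n → m ≠ k → (FinGraphOrderRel ω m k ∨ FinGraphOrderRel ω k m)

/-- `μ` is the law of a random graph order on `{1, 2, …, n}` with parameter `p`:
a probability measure on edge configurations whose coordinates are independent
Bernoulli(`p`) random variables. -/
structure IsFinRandomGraphOrderMeasure {n : ℕ} (μ : Measure (FinGraphOrderEdge n → Bool))
    (p : ℝ) (hp : 0 < p ∧ p < 1) : Prop where
  isProb : IsProbabilityMeasure μ
  indep : iIndepFun (fun e (ω : FinGraphOrderEdge n → Bool) => ω e) μ
  bernoulli : ∀ e : FinGraphOrderEdge n, μ.map (fun ω => ω e) =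
    (PMF.bernoulli (Real.toNNReal p) (Real.toNNReal_le_one.mpr hp.2.le)).toMeasure

/-!
For `m < k`, the relation `m ≺ k` holds iff some edge `(m, j)` with `m < j ≤ k` is present:
such an edge either reaches `k` or leads to an element closer to `k`, and descending induction
on the distance finishes the chain. Symmetrically, `k ≺ m` for `m > k` iff some edge `(j, m)`
with `k ≤ j < m` is present. So `k` is a post iff each of the `n - 1` pairwise disjoint edge
sets attached to the `m ≠ k` contains a present edge; by independence the probability is
`∏_{m ≠ k} (1 - q ^ |m - k|) = λ_{k-1}(q) λ_{n-k}(q)`.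
-/

open Finset

namespace ProbabilityTheory

variable {Ω ι κ : Type*} {mΩ : MeasurableSpace Ω} {μ : Measure Ω}

theorem iIndep.measure_biInter_eq_prod_of_pairwiseDisjoint [IsProbabilityMeasure μ]
    {m : ι → MeasurableSpace Ω} (h_le : ∀ i, m i ≤ mΩ) (h : iIndep m μ)
    {T : Finset κ} {S : κ → Set ι} (hS : (T : Set κ).PairwiseDisjoint S)
    {A : κ → Set Ω} (hA : ∀ j ∈ T, MeasurableSet[⨆ i ∈ S j, m i] (A j)) :
    μ (⋂ j ∈ T, A j) = ∏ j ∈ T, μ (A j) := by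
  classical
  induction T using Finset.induction_on with
  | empty => simp
  | insert a T haT ih =>
    rw [coe_insert, Set.pairwiseDisjoint_insert_of_notMem (by simpa using haT)] at hS
    have hindep := indep_iSup_of_disjoint h_le h
      (Set.disjoint_iUnion₂_right.mpr fun j hj => hS.2 j hj)
    have hA' : ∀ j ∈ T, MeasurableSet[⨆ i ∈ S j, m i] (A j) := fun j hj =>
      hA j (mem_insert_of_mem hj)
    have hmeas : MeasurableSet[⨆ i ∈ ⋃ j ∈ (T : Set κ), S j, m i] (⋂ j ∈ T, A j) :=
      .biInter T.countable_toSet fun j hj =>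
        biSup_mono (f := m) (fun i hi => Set.mem_biUnion hj hi) _ (hA' j hj)
    rw [set_biInter_insert, prod_insert haT, (Indep_iff _ _ _).mp hindep _ _
      (hA a (mem_insert_self a T)) hmeas, ih hS.1 hA']

theorem measurableSet_exists_eq_true_iSup_comap (X : ι → Ω → Bool) (S : Finset ι) :
    MeasurableSet[⨆ i ∈ (S : Set ι), MeasurableSpace.comap (X i) inferInstance]
      {ω | ∃ i ∈ S, X i ω = true} := by
  have : {ω | ∃ i ∈ S, X i ω = true} = ⋃ i ∈ (S : Set ι), X i ⁻¹' {true} := by ext; simp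
  rw [this]
  exact .biUnion S.countable_toSet fun i hi =>
    le_iSup₂ (f := fun i (_ : i ∈ (S : Set ι)) => MeasurableSpace.comap (X i) inferInstance)
      i hi _ ⟨{true}, .singleton true, rfl⟩

theorem iIndepFun.measure_exists_eq_true [IsProbabilityMeasure μ] {X : ι → Ω → Bool}
    (hXm : ∀ i, Measurable (X i)) (hX : iIndepFun X μ) (S : Finset ι) :
    μ {ω | ∃ i ∈ S, X i ω = true} = 1 - ∏ i ∈ S, μ {ω | X i ω = false} := by
  have hcompl : {ω | ∃ i ∈ S, X i ω = true}ᶜ = ⋂ i ∈ S, {ω | X i ω = false} := by ext; simp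
  have hmeas : MeasurableSet (⋂ i ∈ S, {ω | X i ω = false}) :=
    .biInter S.countable_toSet fun i _ => hXm i (.singleton false)
  rw [← hX.meas_biInter (s := fun i => {ω | X i ω = false}) fun i _ =>
    ⟨{false}, .singleton false, rfl⟩, ← prob_compl_eq_one_sub hmeas,
    ← hcompl, compl_compl]

end ProbabilityTheory

theorem Relation.transGen_of_forall_exists_step {α : Type*} {r : α → α → Prop} {P : α → Prop}
    {b : α} (f : α → ℕ) (h : ∀ a, P a → ∃ c, r a c ∧ (c = b ∨ P c ∧ f c < f a)) {a : α}
    (ha : P a) : Relation.TransGen r a b := by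
  induction a using (measure f).wf.induction with
  | _ a ih =>
    obtain ⟨c, hac, rfl | ⟨hc, hlt⟩⟩ := h a ha
    · exact .single hac
    · exact .head hac (ih c hlt hc)

section FinGraphOrder

variable {n k : ℕ} {ω : FinGraphOrderEdge n → Bool}

theorem FinGraphOrderRel.lt {a b : ℕ} (h : FinGraphOrderRel ω a b) : a < b :=
  Relation.transGen_eq_self (r := ((· < ·) : ℕ → ℕ → Prop)).le _ _ <|
    Relation.TransGen.mono (fun _ _ ⟨⟨_, hxy, _⟩, _⟩ => hxy) _ _ h

theorem FinGraphOrderRel.le_of_reflTransGen {a b : ℕ}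
    (h : Relation.ReflTransGen
      (fun x y => ∃ h : 1 ≤ x ∧ x < y ∧ y ≤ n, ω ⟨(x, y), h⟩ = true) a b) :
    a ≤ b := by
  obtain rfl | h := Relation.reflTransGen_iff_eq_or_transGen.mp h
  · exact le_rfl
  · exact (FinGraphOrderRel.lt h).le

def edgesToward (n k m : ℕ) : Finset (FinGraphOrderEdge n) :=
  ((Ioc m k).image (m, ·) ∪ (Ico k m).image (·, m)).subtype
    fun ij : ℕ × ℕ => 1 ≤ ij.1 ∧ ij.1 < ij.2 ∧ ij.2 ≤ n

theorem mem_edgesToward {m : ℕ} {e : FinGraphOrderEdge n} :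
    e ∈ edgesToward n k m ↔ e.1.1 = m ∧ e.1.2 ≤ k ∨ e.1.2 = m ∧ k ≤ e.1.1 := by
  obtain ⟨⟨a, b⟩, h1, hab, hbn⟩ := e
  simp [edgesToward]
  omega

theorem card_edgesToward {m : ℕ} (hm1 : 1 ≤ m) (hmn : m ≤ n) (hk1 : 1 ≤ k) (hkn : k ≤ n) :
    (edgesToward n k m).card = m.dist k := by
  rw [edgesToward, card_subtype, filter_true_of_mem, card_union_of_disjoint,
    card_image_of_injective _ fun _ _ h => (Prod.mk.inj h).2,
    card_image_of_injective _ fun _ _ h => (Prod.mk.inj h).1, Nat.card_Ioc, Nat.card_Ico,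
    Nat.dist, add_comm]
  · simp [disjoint_left]
    omega
  · simp
    omega

theorem pairwise_disjoint_edgesToward (n k : ℕ) :
    Pairwise (Function.onFun Disjoint fun m =>
      (edgesToward n k m : Set (FinGraphOrderEdge n))) := by
  intro a b hab
  simp only [Function.onFun, disjoint_coe, disjoint_left, mem_edgesToward]
  intro e
  have := e.2.2.1
  omega

theorem exists_mem_edgesToward_of_rel {m : ℕ}
    (h : FinGraphOrderRel ω m k ∨ FinGraphOrderRel ω k m) :
    ∃ e ∈ edgesToward n k m, ω e = true := by
  rcases h with h | h
  · obtain ⟨j, ⟨hmj, hω⟩, hjk⟩ := Relation.TransGen.head'_iff.mp h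
    exact ⟨⟨(m, j), hmj⟩,
      mem_edgesToward.mpr (.inl ⟨rfl, FinGraphOrderRel.le_of_reflTransGen hjk⟩), hω⟩
  · obtain ⟨j, hkj, hjm, hω⟩ := Relation.TransGen.tail'_iff.mp h
    exact ⟨⟨(j, m), hjm⟩,
      mem_edgesToward.mpr (.inr ⟨rfl, FinGraphOrderRel.le_of_reflTransGen hkj⟩), hω⟩

theorem rel_of_forall_exists_mem_edgesToward
    (h : ∀ m ∈ (Icc 1 n).erase k, ∃ e ∈ edgesToward n k m, ω e = true) {m : ℕ}
    (hm : m ∈ (Icc 1 n).erase k) : FinGraphOrderRel ω m k ∨ FinGraphOrderRel ω k m := by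
  rw [mem_erase, mem_Icc] at hm
  rcases lt_or_gt_of_ne hm.1 with hmk | hkm
  · refine .inl <| Relation.transGen_of_forall_exists_step
      (P := fun a => 1 ≤ a ∧ a ≤ n ∧ a < k) (fun a => k - a) ?_ ⟨hm.2.1, hm.2.2, hmk⟩
    rintro a ⟨ha, han, hak⟩
    obtain ⟨⟨⟨x, c⟩, hxc⟩, he, hω⟩ := h a (by simp only [mem_erase, mem_Icc]; omega)
    obtain ⟨rfl, hck⟩ : x = a ∧ c ≤ k := by simp only [mem_edgesToward] at he; omega
    exact ⟨c, ⟨hxc, hω⟩, by omega⟩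
  · refine .inr <| Relation.transGen_swap.mp <| Relation.transGen_of_forall_exists_step
      (P := fun a => 1 ≤ a ∧ a ≤ n ∧ k < a) (fun a => a - k) ?_ ⟨hm.2.1, hm.2.2, hkm⟩
    rintro a ⟨ha, han, hka⟩
    obtain ⟨⟨⟨c, x⟩, hcx⟩, he, hω⟩ := h a (by simp only [mem_erase, mem_Icc]; omega)
    obtain ⟨rfl, hkc⟩ : x = a ∧ k ≤ c := by simp only [mem_edgesToward] at he; omega
    exact ⟨c, ⟨hcx, hω⟩, by omega⟩

theorem finIsPost_iff :
    FinIsPost ω k ↔ ∀ m ∈ (Icc 1 n).erase k, ∃ e ∈ edgesToward n k m, ω e = true := by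
  refine ⟨fun h m hm => exists_mem_edgesToward_of_rel ?_,
    fun h m hm1 hmn hmk => rel_of_forall_exists_mem_edgesToward h ?_⟩
  · rw [mem_erase, mem_Icc] at hm
    exact h m hm.2.1 hm.2.2 hm.1
  · exact mem_erase.mpr ⟨hmk, mem_Icc.mpr ⟨hm1, hmn⟩⟩

end FinGraphOrder

theorem prod_erase_Icc_dist {M : Type*} [CommMonoid M] (f : ℕ → M) {n k : ℕ} (hk1 : 1 ≤ k)
    (hkn : k ≤ n) : ∏ m ∈ (Icc 1 n).erase k, f (m.dist k) =
      (∏ i ∈ range (k - 1), f (i + 1)) * ∏ i ∈ range (n - k), f (i + 1) := by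
  have hsplit : (Icc 1 n).erase k = Ico 1 k ∪ Ioc k n := by
    ext
    simp only [mem_erase, mem_Icc, mem_union, mem_Ico, mem_Ioc]
    omega
  have hdisj : Disjoint (Ico 1 k) (Ioc k n) :=
    disjoint_left.mpr fun m h h' => by simp only [mem_Ico, mem_Ioc] at h h'; omega
  rw [hsplit, prod_union hdisj]
  congr 1
  · refine prod_nbij' (k - 1 - ·) (k - 1 - ·) ?_ ?_ ?_ ?_ ?_ <;>
      intro m hm <;> simp only [mem_Ico, mem_range, Nat.dist] at hm ⊢
    all_goals first | omega | congr 1; omega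
  · refine prod_nbij' (· - k - 1) (· + k + 1) ?_ ?_ ?_ ?_ ?_ <;>
      intro m hm <;> simp only [mem_Ioc, mem_range, Nat.dist] at hm ⊢
    all_goals first | omega | congr 1; omega

namespace IsFinRandomGraphOrderMeasure

variable {n : ℕ} {μ : Measure (FinGraphOrderEdge n → Bool)} {p : ℝ} {hp : 0 < p ∧ p < 1}

theorem measure_setOf_eq_false (hμ : IsFinRandomGraphOrderMeasure μ p hp)
    (e : FinGraphOrderEdge n) : μ {ω | ω e = false} = ENNReal.ofReal (1 - p) := by
  change μ ((fun ω => ω e) ⁻¹' {false}) = _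
  rw [← Measure.map_apply (measurable_pi_apply e) (.singleton false), hμ.bernoulli e,
    PMF.toMeasure_apply_singleton _ _ (.singleton false), PMF.bernoulli, PMF.ofFintype_apply,
    cond_false, ENNReal.ofReal_sub _ hp.1.le, ENNReal.ofReal_one]
  rfl

theorem measure_setOf_exists_eq_true (hμ : IsFinRandomGraphOrderMeasure μ p hp)
    (S : Finset (FinGraphOrderEdge n)) :
    μ {ω | ∃ e ∈ S, ω e = true} = ENNReal.ofReal (1 - (1 - p) ^ S.card) := by
  have := hμ.isProb
  have hq : 0 ≤ 1 - p := by linarith [hp.2]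
  rw [hμ.indep.measure_exists_eq_true measurable_pi_apply S,
    prod_congr rfl fun e _ => hμ.measure_setOf_eq_false e, prod_const, ← ENNReal.ofReal_pow hq,
    ENNReal.ofReal_sub _ (pow_nonneg hq _), ENNReal.ofReal_one]

end IsFinRandomGraphOrderMeasure

theorem fin_prob_isPost_eq_general (p q : ℝ) (hp : 0 < p ∧ p < 1) (hq : q = 1 - p)
    (n : ℕ) (μ : Measure (FinGraphOrderEdge n → Bool))
    (hμ : IsFinRandomGraphOrderMeasure μ p hp) (k : ℕ) (hk1 : 1 ≤ k) (hkn : k ≤ n) :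
    μ {ω | FinIsPost ω k} = ENNReal.ofReal (eulerLam q (k - 1) * eulerLam q (n - k)) := by
  have := hμ.isProb
  have hpost : {ω | FinIsPost ω k} =
      ⋂ m ∈ (Icc 1 n).erase k, {ω | ∃ e ∈ edgesToward n k m, ω e = true} := by
    ext; simp [finIsPost_iff]
  have hfactor : ∀ m ∈ (Icc 1 n).erase k,
      μ {ω | ∃ e ∈ edgesToward n k m, ω e = true} = ENNReal.ofReal (1 - q ^ m.dist k) := by
    intro m hm
    rw [mem_erase, mem_Icc] at hm
    rw [hμ.measure_setOf_exists_eq_true, card_edgesToward hm.2.1 hm.2.2 hk1 hkn, hq]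
  rw [hpost, iIndep.measure_biInter_eq_prod_of_pairwiseDisjoint
      (fun e => (measurable_pi_apply e).comap_le) hμ.indep.iIndep
      ((pairwise_disjoint_edgesToward n k).set_pairwise _)
      (fun m _ => measurableSet_exists_eq_true_iSup_comap _ _),
    prod_congr rfl hfactor, ← ENNReal.ofReal_prod_of_nonneg fun m _ => ?_,
    prod_erase_Icc_dist (fun d => 1 - q ^ d) hk1 hkn]
  · rfl
  · have : q ^ m.dist k ≤ 1 := pow_le_one₀ (by linarith) (by linarith)
    linarith

/-- In a random graph order on `{1, 2, …, n}` with parameter `0 < p < 1`, `q = 1 - p`, and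
`n ≥ 1`, for every `1 ≤ k ≤ n` the probability that `k` is a post equals
`λ_{k-1}(q) · λ_{n-k}(q)`. -/
theorem fin_prob_isPost_eq (p q : ℝ) (hp : 0 < p ∧ p < 1) (hq : q = 1 - p)
    (n : ℕ) (hn : 1 ≤ n) (μ : Measure (FinGraphOrderEdge n → Bool))
    (hμ : IsFinRandomGraphOrderMeasure μ p hp) (k : ℕ) (hk1 : 1 ≤ k) (hkn : k ≤ n) :
    μ {ω | FinIsPost ω k} = ENNReal.ofReal (eulerLam q (k - 1) * eulerLam q (n - k)) :=
  fin_prob_isPost_eq_general p q hp hq n μ hμ k hk1 hkn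
end

section
/- For all 0<q<1 and all integers n≥2, the partial product of the Euler function satisfies λ_{n−1}(q) − κ(q) < q^n. -/
/-- The tail product `μ_n(q) = ∏_{i=n}^∞ (1 - q^i)`. -/
noncomputable def eulerMu (q : ℝ) (n : ℕ) : ℝ := ∏' i : ℕ, (1 - q ^ (n + i))

/-- The offset `b_n(q) = Σ_{k=1}^n λ_{k-1}(q) λ_{n-k}(q) - n κ(q)²`, the expected number of
posts in a random graph order on `n` elements minus `n κ(q)²`. -/
noncomputable def postOffset (q : ℝ) (n : ℕ) : ℝ :=
  (∑ k ∈ Finset.Icc 1 n, eulerLam q (k - 1) * eulerLam q (n - k)) - n * eulerKappa q ^ 2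

open Finset

section WeierstrassProduct

variable {ι : Type*} {a : ι → ℝ}

theorem Finset.one_sub_sum_le_prod_one_sub (h0 : ∀ i, 0 ≤ a i) (h1 : ∀ i, a i ≤ 1)
    (s : Finset ι) : 1 - ∑ i ∈ s, a i ≤ ∏ i ∈ s, (1 - a i) := by
  classical
  induction s using Finset.induction with
  | empty => simp
  | insert x s hx ih =>
    rw [prod_insert hx, sum_insert hx]
    have hs : 0 ≤ ∑ i ∈ s, a i := sum_nonneg fun i _ ↦ h0 i
    nlinarith [h0 x, h1 x]

theorem one_sub_tsum_le_tprod_one_sub (h0 : ∀ i, 0 ≤ a i) (h1 : ∀ i, a i ≤ 1)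
    (ha : Summable a) : 1 - ∑' i, a i ≤ ∏' i, (1 - a i) := by
  have hm : Multipliable fun i ↦ 1 - a i := by
    simpa only [sub_eq_add_neg] using Real.multipliable_one_add_of_summable ha.neg
  refine ge_of_tendsto' hm.hasProd fun s ↦ ?_
  calc 1 - ∑' i, a i ≤ 1 - ∑ i ∈ s, a i := by linarith [ha.sum_le_tsum s fun i _ ↦ h0 i]
    _ ≤ ∏ i ∈ s, (1 - a i) := s.one_sub_sum_le_prod_one_sub h0 h1

theorem tprod_one_sub_le_one (h0 : ∀ i, 0 ≤ a i) (h1 : ∀ i, a i ≤ 1) :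
    ∏' i, (1 - a i) ≤ 1 := by
  by_cases hm : Multipliable fun i ↦ 1 - a i
  · refine le_of_tendsto' hm.hasProd fun s ↦ prod_le_one (fun i _ ↦ ?_) fun i _ ↦ ?_
    · linarith [h1 i]
    · linarith [h0 i]
  · rw [tprod_eq_one_of_not_multipliable hm]

end WeierstrassProduct

section EulerProducts

variable {q : ℝ}

theorem hasSum_pow_add (hq0 : 0 ≤ q) (hq1 : q < 1) (n : ℕ) :
    HasSum (fun i ↦ q ^ (n + i)) (q ^ n / (1 - q)) := by
  simpa only [pow_add, div_eq_mul_inv] using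
    (hasSum_geometric_of_lt_one hq0 hq1).mul_left (q ^ n)

theorem multipliable_one_sub_pow_add (hq0 : 0 ≤ q) (hq1 : q < 1) (n : ℕ) :
    Multipliable fun i ↦ 1 - q ^ (n + i) := by
  simpa only [sub_eq_add_neg] using
    Real.multipliable_one_add_of_summable (hasSum_pow_add hq0 hq1 n).summable.neg

theorem eulerKappa_eq_eulerLam_mul_eulerMu (hq0 : 0 ≤ q) (hq1 : q < 1) (k : ℕ) :
    eulerKappa q = eulerLam q k * eulerMu q (k + 1) := by
  have htail : Multipliable fun i ↦ 1 - q ^ (i + k + 1) := by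
    convert multipliable_one_sub_pow_add hq0 hq1 (k + 1) using 3; ring
  rw [eulerKappa, eulerLam, eulerMu,
    ← htail.prod_mul_tprod_nat_mul' (f := fun i ↦ 1 - q ^ (i + 1))]
  congr 2 with i
  ring_nf

theorem eulerMu_eq_mul_eulerMu_succ (hq0 : 0 ≤ q) (hq1 : q < 1) (n : ℕ) :
    eulerMu q n = (1 - q ^ n) * eulerMu q (n + 1) := by
  have htail : Multipliable fun i ↦ 1 - q ^ (n + (i + 1)) := by
    convert multipliable_one_sub_pow_add hq0 hq1 (n + 1) using 3; ring
  rw [eulerMu, tprod_eq_zero_mul' (f := fun i ↦ 1 - q ^ (n + i)) htail, eulerMu, add_zero]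
  congr 2 with i
  ring_nf

theorem one_sub_div_le_eulerMu (hq0 : 0 ≤ q) (hq1 : q < 1) (n : ℕ) :
    1 - q ^ n / (1 - q) ≤ eulerMu q n := by
  rw [← (hasSum_pow_add hq0 hq1 n).tsum_eq]
  exact one_sub_tsum_le_tprod_one_sub (fun _ ↦ pow_nonneg hq0 _)
    (fun _ ↦ pow_le_one₀ hq0 hq1.le) (hasSum_pow_add hq0 hq1 n).summable

theorem eulerMu_le_one (hq0 : 0 ≤ q) (hq1 : q ≤ 1) (n : ℕ) : eulerMu q n ≤ 1 :=
  tprod_one_sub_le_one (fun _ ↦ pow_nonneg hq0 _) fun _ ↦ pow_le_one₀ hq0 hq1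

/-- Peeling off the first factor before applying the Weierstrass bound makes it strict. -/
theorem one_sub_eulerMu_lt (hq0 : 0 < q) (hq1 : q < 1) (n : ℕ) :
    1 - eulerMu q n < q ^ n / (1 - q) := by
  have hq : 0 < 1 - q := sub_pos.2 hq1
  have hlead : 0 ≤ 1 - q ^ n := sub_nonneg.2 (pow_le_one₀ hq0.le hq1.le)
  have htail := one_sub_div_le_eulerMu hq0.le hq1 (n + 1)
  have hprod : 0 < q ^ n * q ^ (n + 1) / (1 - q) := by positivity
  calc 1 - eulerMu q n ≤ 1 - (1 - q ^ n) * (1 - q ^ (n + 1) / (1 - q)) := by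
        rw [eulerMu_eq_mul_eulerMu_succ hq0.le hq1]
        linarith [mul_le_mul_of_nonneg_left htail hlead]
    _ = q ^ n / (1 - q) - q ^ n * q ^ (n + 1) / (1 - q) := by
        field_simp
        ring
    _ < q ^ n / (1 - q) := by linarith

theorem eulerLam_le_one_sub (hq0 : 0 ≤ q) (hq1 : q ≤ 1) {k : ℕ} (hk : 1 ≤ k) :
    eulerLam q k ≤ 1 - q := by
  obtain ⟨k, rfl⟩ := Nat.exists_eq_add_of_le' hk
  have htail : ∏ i ∈ range k, (1 - q ^ (i + 1 + 1)) ≤ 1 :=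
    prod_le_one (fun _ _ ↦ sub_nonneg.2 (pow_le_one₀ hq0 hq1))
      fun _ _ ↦ sub_le_self _ (pow_nonneg hq0 _)
  rw [eulerLam, prod_range_succ', zero_add, pow_one]
  exact mul_le_of_le_one_left (sub_nonneg.2 hq1) htail

end EulerProducts

/-- For all `0 < q < 1` and all integers `n ≥ 2`, `λ_{n-1}(q) - κ(q) < q^n`. -/
theorem lam_sub_kappa_lt (q : ℝ) (hq0 : 0 < q) (hq1 : q < 1) (n : ℕ) (hn : 2 ≤ n) :
    eulerLam q (n - 1) - eulerKappa q < q ^ n := by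
  obtain ⟨m, rfl⟩ : ∃ m, n = m + 1 := ⟨n - 1, by omega⟩
  have hq : 0 < 1 - q := sub_pos.2 hq1
  have hlam := eulerLam_le_one_sub hq0.le hq1.le (k := m) (by omega)
  have hmu := one_sub_eulerMu_lt hq0 hq1 (m + 1)
  have hmu1 := eulerMu_le_one hq0.le hq1.le (m + 1)
  calc eulerLam q (m + 1 - 1) - eulerKappa q
      = eulerLam q m * (1 - eulerMu q (m + 1)) := by
        rw [eulerKappa_eq_eulerLam_mul_eulerMu hq0.le hq1 m, Nat.add_sub_cancel]
        ring
    _ ≤ (1 - q) * (1 - eulerMu q (m + 1)) := mul_le_mul_of_nonneg_right hlam (by linarith)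
    _ < (1 - q) * (q ^ (m + 1) / (1 - q)) := mul_lt_mul_of_pos_left hmu hq
    _ = q ^ (m + 1) := mul_div_cancel₀ _ hq.ne'
end

section
/- For all complex numbers x, z with |x|<1 and |z|<1, the following identity holds: ∏_{m=1}^{∞}(1−x^m z) = ( Σ_{k=0}^{∞} x^k z^k / ∏_{i=1}^{k}(1−x^i) )^{−1}; equivalently, ∏_{m=1}^{∞}(1−x^m z) · Σ_{k=0}^{∞} (x z)^k / ∏_{i=1}^{k}(1−x^i) = 1 (both the product and the series converge, and the series sum is nonzero). -/
/-!
The series `F w = ∑ₖ xᵏ wᵏ / (x; x)ₖ` satisfies `F (x w) = (1 - x w) F w`, hence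
`F (xⁿ z) = ∏_{m<n} (1 - x^{m+1} z) · F z`. As `n → ∞`, `xⁿ z → 0` and `F (xⁿ z) → F 0 = 1` by
dominated convergence: the terms are bounded by `C ‖x z‖ᵏ`, since `(x; x)ₖ` converges to a
nonzero limit and so `1 / (x; x)ₖ` is bounded.
-/

open Finset Filter Topology

variable {𝕜 : Type*} [NormedField 𝕜]

/-- `(x; x)_k` in q-Pochhammer notation. -/
noncomputable def qPochhammer (x : 𝕜) (k : ℕ) : 𝕜 := ∏ i ∈ range k, (1 - x ^ (i + 1))

noncomputable def eulerTerm (x w : 𝕜) (k : ℕ) : 𝕜 := x ^ k * w ^ k / qPochhammer x k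

noncomputable def eulerSeries (x w : 𝕜) : 𝕜 := ∑' k, eulerTerm x w k

section

variable {x : 𝕜}

lemma norm_pow_mul_le (hx : ‖x‖ ≤ 1) (n : ℕ) (a : 𝕜) : ‖x ^ n * a‖ ≤ ‖a‖ := by
  rw [norm_mul, norm_pow]
  exact mul_le_of_le_one_left (norm_nonneg a) (pow_le_one₀ (norm_nonneg x) hx)

lemma qPochhammer_succ (x : 𝕜) (k : ℕ) :
    qPochhammer x (k + 1) = qPochhammer x k * (1 - x ^ (k + 1)) :=
  prod_range_succ _ _

lemma one_sub_pow_succ_ne_zero (hx : ‖x‖ < 1) (i : ℕ) : 1 - x ^ (i + 1) ≠ 0 := by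
  intro h
  have := pow_lt_one₀ (norm_nonneg x) hx (Nat.succ_ne_zero i)
  rw [← norm_pow, ← sub_eq_zero.mp h, norm_one] at this
  exact lt_irrefl _ this

lemma qPochhammer_ne_zero (hx : ‖x‖ < 1) (k : ℕ) : qPochhammer x k ≠ 0 :=
  prod_ne_zero_iff.mpr fun i _ ↦ one_sub_pow_succ_ne_zero hx i

lemma summable_norm_pow_succ_mul (hx : ‖x‖ < 1) (a : 𝕜) :
    Summable fun n : ℕ ↦ ‖x ^ (n + 1) * a‖ := by
  simpa [norm_mul, norm_pow] using
    ((summable_nat_add_iff 1).mpr (summable_geometric_of_lt_one (norm_nonneg x) hx)).mul_right ‖a‖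

lemma multipliable_one_sub_pow_succ_mul [CompleteSpace 𝕜] (hx : ‖x‖ < 1) (a : 𝕜) :
    Multipliable fun n : ℕ ↦ 1 - x ^ (n + 1) * a := by
  simpa [sub_eq_add_neg] using
    multipliable_one_add_of_summable (f := fun n ↦ -(x ^ (n + 1) * a))
      (by simpa using summable_norm_pow_succ_mul hx a)

lemma tprod_one_sub_pow_succ_ne_zero [CompleteSpace 𝕜] (hx : ‖x‖ < 1) :
    ∏' n : ℕ, (1 - x ^ (n + 1)) ≠ 0 := by
  simpa [sub_eq_add_neg] using
    tprod_one_add_ne_zero_of_summable (f := fun n : ℕ ↦ -x ^ (n + 1))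
      (by simpa [← sub_eq_add_neg] using one_sub_pow_succ_ne_zero hx)
      (by simpa using summable_norm_pow_succ_mul hx 1)

lemma exists_norm_inv_qPochhammer_le [CompleteSpace 𝕜] (hx : ‖x‖ < 1) :
    ∃ C, ∀ k, ‖(qPochhammer x k)⁻¹‖ ≤ C := by
  have hP : Tendsto (qPochhammer x) atTop (𝓝 (∏' n : ℕ, (1 - x ^ (n + 1)))) := by
    have h := (multipliable_one_sub_pow_succ_mul hx 1).hasProd.tendsto_prod_nat
    simp only [mul_one] at h
    exact h
  have hlim := hP.inv₀ (tprod_one_sub_pow_succ_ne_zero hx)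
  obtain ⟨C, hC⟩ := isBounded_iff_forall_norm_le.mp (Metric.isBounded_range_of_tendsto _ hlim)
  exact ⟨C, fun k ↦ hC _ ⟨k, rfl⟩⟩

lemma norm_eulerTerm_le {C : ℝ} (hC : ∀ k, ‖(qPochhammer x k)⁻¹‖ ≤ C) (w : 𝕜) (k : ℕ) :
    ‖eulerTerm x w k‖ ≤ C * ‖x * w‖ ^ k := by
  rw [eulerTerm, div_eq_mul_inv, ← mul_pow, norm_mul, norm_pow, mul_comm]
  gcongr
  exact hC k

lemma summable_eulerTerm [CompleteSpace 𝕜] (hx : ‖x‖ < 1) {w : 𝕜} (hxw : ‖x * w‖ < 1) :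
    Summable (eulerTerm x w) := by
  obtain ⟨C, hC⟩ := exists_norm_inv_qPochhammer_le hx
  exact Summable.of_norm_bounded ((summable_geometric_of_lt_one (norm_nonneg _) hxw).mul_left C)
    (norm_eulerTerm_le hC w)

lemma eulerTerm_succ_mul (hx : ‖x‖ < 1) (w : 𝕜) (k : ℕ) :
    eulerTerm x w (k + 1) * (1 - x ^ (k + 1)) = x * w * eulerTerm x w k := by
  have := one_sub_pow_succ_ne_zero hx k
  have := qPochhammer_ne_zero hx k
  rw [eulerTerm, eulerTerm, qPochhammer_succ]
  field_simp
  ring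

lemma eulerSeries_zero (x : 𝕜) : eulerSeries x 0 = 1 := by
  rw [eulerSeries, tsum_eq_single 0 fun k hk ↦ by simp [eulerTerm, zero_pow hk]]
  simp [eulerTerm, qPochhammer]

lemma eulerSeries_mul_left [CompleteSpace 𝕜] (hx : ‖x‖ < 1) {w : 𝕜} (hxw : ‖x * w‖ < 1) :
    eulerSeries x (x * w) = (1 - x * w) * eulerSeries x w := by
  have hs := summable_eulerTerm hx hxw
  have hs' : Summable (eulerTerm x (x * w)) :=
    summable_eulerTerm hx (by
      rw [norm_mul]; exact mul_lt_one_of_nonneg_of_lt_one_right hx.le (norm_nonneg _) hxw)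
  have hdiff : ∀ k, eulerTerm x w k - eulerTerm x (x * w) k = eulerTerm x w k * (1 - x ^ k) := by
    intro k
    simp only [eulerTerm, mul_pow]
    ring
  have hsum : eulerSeries x w - eulerSeries x (x * w) = x * w * eulerSeries x w :=
    calc eulerSeries x w - eulerSeries x (x * w)
        = ∑' k, eulerTerm x w k * (1 - x ^ k) := by
          rw [eulerSeries, eulerSeries, ← hs.tsum_sub hs']
          exact tsum_congr hdiff
      _ = ∑' k, eulerTerm x w (k + 1) * (1 - x ^ (k + 1)) := by
          rw [((hs.sub hs').congr hdiff).tsum_eq_zero_add]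
          simp
      _ = x * w * eulerSeries x w := by
          rw [tsum_congr (eulerTerm_succ_mul hx w), tsum_mul_left, eulerSeries]
  linear_combination -hsum

lemma eulerSeries_pow_mul [CompleteSpace 𝕜] (hx : ‖x‖ < 1) {z : 𝕜} (hxz : ‖x * z‖ < 1) (n : ℕ) :
    eulerSeries x (x ^ n * z) = (∏ m ∈ range n, (1 - x ^ (m + 1) * z)) * eulerSeries x z := by
  induction n with
  | zero => simp
  | succ n ih =>
    have hxw : ‖x * (x ^ n * z)‖ < 1 := by
      rw [mul_left_comm]
      exact (norm_pow_mul_le hx.le n _).trans_lt hxz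
    rw [pow_succ', mul_assoc, eulerSeries_mul_left hx hxw, ih, prod_range_succ]
    ring

lemma tendsto_eulerSeries_pow_mul [CompleteSpace 𝕜] (hx : ‖x‖ < 1) {z : 𝕜}
    (hxz : ‖x * z‖ < 1) : Tendsto (fun n ↦ eulerSeries x (x ^ n * z)) atTop (𝓝 1) := by
  obtain ⟨C, hC⟩ := exists_norm_inv_qPochhammer_le hx
  have hw : Tendsto (fun n ↦ x ^ n * z) atTop (𝓝 0) := by
    simpa using (tendsto_pow_atTop_nhds_zero_of_norm_lt_one hx).mul_const z
  rw [← eulerSeries_zero x]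
  refine tendsto_tsum_of_dominated_convergence
    ((summable_geometric_of_lt_one (norm_nonneg _) hxz).mul_left C) (fun k ↦ ?_)
    (.of_forall fun n k ↦ ?_)
  · have hcont : Continuous fun w ↦ eulerTerm x w k := by
      unfold eulerTerm
      fun_prop
    exact (hcont.tendsto 0).comp hw
  · refine (norm_eulerTerm_le hC _ k).trans ?_
    have hC0 : 0 ≤ C := (norm_nonneg _).trans (hC 0)
    rw [mul_left_comm]
    gcongr
    exact norm_pow_mul_le hx.le n _

lemma tprod_mul_eulerSeries [CompleteSpace 𝕜] (hx : ‖x‖ < 1) {z : 𝕜} (hxz : ‖x * z‖ < 1) :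
    (∏' m : ℕ, (1 - x ^ (m + 1) * z)) * eulerSeries x z = 1 :=
  tendsto_nhds_unique
    (((multipliable_one_sub_pow_succ_mul hx z).hasProd.tendsto_prod_nat.mul_const _).congr
      fun n ↦ (eulerSeries_pow_mul hx hxz n).symm)
    (tendsto_eulerSeries_pow_mul hx hxz)

end

/-- For all complex `x`, `z` with `|x| < 1` and `|z| < 1`:
`∏_{m=1}^∞ (1 - x^m z) = (Σ_{k=0}^∞ x^k z^k / ∏_{i=1}^k (1 - x^i))⁻¹`; both the product and
the series converge, the sum of the series is nonzero, and equivalently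
`∏_{m=1}^∞ (1 - x^m z) · Σ_{k=0}^∞ (xz)^k / ∏_{i=1}^k (1 - x^i) = 1`. -/
theorem euler_product_inverse_identity (x z : ℂ) (hx : ‖x‖ < 1)
    (hz : ‖z‖ < 1) :
    Multipliable (fun m : ℕ => 1 - x ^ (m + 1) * z) ∧
    Summable (fun k : ℕ => x ^ k * z ^ k / ∏ i ∈ Finset.range k, (1 - x ^ (i + 1))) ∧
    (∑' k : ℕ, x ^ k * z ^ k / ∏ i ∈ Finset.range k, (1 - x ^ (i + 1))) ≠ 0 ∧
    (∏' m : ℕ, (1 - x ^ (m + 1) * z)) =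
      (∑' k : ℕ, x ^ k * z ^ k / ∏ i ∈ Finset.range k, (1 - x ^ (i + 1)))⁻¹ ∧
    (∏' m : ℕ, (1 - x ^ (m + 1) * z)) *
      (∑' k : ℕ, x ^ k * z ^ k / ∏ i ∈ Finset.range k, (1 - x ^ (i + 1))) = 1 := by
  have hxz : ‖x * z‖ < 1 := by
    rw [norm_mul]
    exact mul_lt_one_of_nonneg_of_lt_one_left (norm_nonneg x) hx hz.le
  have h := tprod_mul_eulerSeries hx hxz
  exact ⟨multipliable_one_sub_pow_succ_mul hx z, summable_eulerTerm hx hxz,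
    right_ne_zero_of_mul_eq_one h, eq_inv_of_mul_eq_one_left h, h⟩
end
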